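/- Let Q be a seminormal quasi-crystal. The hypoplactic congruence ∼̈ on F^⊗̈(Q) is a monoid congruence on the free monoid Q*: it is an equivalence relation on Q*, and for all u, v, u', v' ∈ Q*, if u ∼̈ v and u' ∼̈ v' then uu' ∼̈ vv'. -/

import Mathlib

/-! ## Root system setting -/

/-- The data of a root system `Φ` in a Euclidean space `V`, together with a choice of
simple roots `(α_i)_{i ∈ ι}` and a weight lattice `Λ`, with the integer-valued coroot
pairing `pair λ i = ⟨λ, α_i^∨⟩ = 2⟪λ, α_i⟫/⟪α_i, α_i⟫` on the weight lattice. -/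
structure QCSetting (V : Type*) [NormedAddCommGroup V] [InnerProductSpace ℝ V]
    (ι : Type*) where
  Φ : Set V
  finite : Φ.Finite
  nonempty : Φ.Nonempty
  zero_not_mem : (0 : V) ∉ Φ
  reflect_mem : ∀ a ∈ Φ, ∀ b ∈ Φ, b - (2 * (inner ℝ b a : ℝ) / (inner ℝ a a : ℝ)) • a ∈ Φ
  smul_root : ∀ a ∈ Φ, ∀ k : ℝ, k • a ∈ Φ → k = 1 ∨ k = -1
  simple : ι → V
  simple_mem : ∀ i, simple i ∈ Φ
  simple_indep : LinearIndependent ℝ simple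
  Λ : AddSubgroup V
  lattice_spans : Submodule.span ℝ (Λ : Set V) = ⊤
  root_mem_lattice : ∀ a ∈ Φ, a ∈ Λ
  pair : Λ → ι → ℤ
  pair_spec : ∀ (v : Λ) (i : ι),
    (pair v i : ℝ) = 2 * (inner ℝ (v : V) (simple i) : ℝ) / (inner ℝ (simple i) (simple i) : ℝ)

variable {V : Type*} [NormedAddCommGroup V] [InnerProductSpace ℝ V] {ι : Type*}

/-! ## Quasi-crystals -/

/-- The structure maps of a quasi-crystal of type `S` on an underlying set `Q`:
a weight map `wt` with values in the weight lattice, partial quasi-Kashiwara operators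
`e i, f i : Q → Q ⊔ {⊥}` (realized as `Option`-valued maps, `none` playing the role
of `⊥`), and maps `ε i, φ i : Q → ℤ ∪ {+∞}` (realized as `WithTop ℤ`). -/
structure QC (S : QCSetting V ι) (Q : Type*) where
  wt : Q → S.Λ
  e : ι → Q → Option Q
  f : ι → Q → Option Q
  ε : ι → Q → WithTop ℤ
  φ : ι → Q → WithTop ℤ

/-- `k`-fold iteration of a partial map `g : Q → Option Q` starting at `x`. -/
def optIter {Q : Type*} (g : Q → Option Q) (k : ℕ) (x : Q) : Option Q :=
  (fun o => o.bind g)^[k] (some x)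

/-- The axioms of a seminormal quasi-crystal. -/
structure QC.IsSeminormal {S : QCSetting V ι} {Q : Type*} (𝒬 : QC S Q) : Prop where
  phi_eq : ∀ i x, 𝒬.φ i x = 𝒬.ε i x + ((S.pair (𝒬.wt x) i : ℤ) : WithTop ℤ)
  wt_e : ∀ i x y, 𝒬.e i x = some y → (𝒬.wt y : V) = (𝒬.wt x : V) + S.simple i
  wt_f : ∀ i x y, 𝒬.f i x = some y → (𝒬.wt y : V) = (𝒬.wt x : V) - S.simple i
  e_iff_f : ∀ i x y, 𝒬.e i x = some y ↔ 𝒬.f i y = some x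
  e_of_top : ∀ i x, 𝒬.ε i x = ⊤ → 𝒬.e i x = none
  f_of_top : ∀ i x, 𝒬.ε i x = ⊤ → 𝒬.f i x = none
  eps_spec : ∀ i x, 𝒬.ε i x ≠ ⊤ → ∃ n : ℕ, 𝒬.ε i x = ((n : ℤ) : WithTop ℤ) ∧
    IsGreatest {k : ℕ | (optIter (𝒬.e i) k x).isSome} n
  phi_spec : ∀ i x, 𝒬.ε i x ≠ ⊤ → ∃ n : ℕ, 𝒬.φ i x = ((n : ℤ) : WithTop ℤ) ∧
    IsGreatest {k : ℕ | (optIter (𝒬.f i) k x).isSome} n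

/-- A seminormal crystal is a seminormal quasi-crystal in which `ε i x ≠ +∞` always. -/
def QC.IsSeminormalCrystal {S : QCSetting V ι} {Q : Type*} (𝒬 : QC S Q) : Prop :=
  𝒬.IsSeminormal ∧ ∀ i x, 𝒬.ε i x ≠ ⊤

/-! ## Tensor product -/

/-- The tensor product of two quasi-crystals of the same type. -/
noncomputable def QC.tensor {S : QCSetting V ι} {Q Q' : Type*} (𝒬 : QC S Q) (𝒬' : QC S Q') :
    QC S (Q × Q') where
  wt p := 𝒬.wt p.1 + 𝒬'.wt p.2
  ε i p := max (𝒬.ε i p.1) (𝒬'.ε i p.2 + ((-(S.pair (𝒬.wt p.1) i) : ℤ) : WithTop ℤ))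
  φ i p := max (𝒬.φ i p.1 + ((S.pair (𝒬'.wt p.2) i : ℤ) : WithTop ℤ)) (𝒬'.φ i p.2)
  e i p := if 𝒬'.ε i p.2 ≤ 𝒬.φ i p.1
    then (𝒬.e i p.1).map (fun y => (y, p.2))
    else (𝒬'.e i p.2).map (fun y => (p.1, y))
  f i p := if 𝒬'.ε i p.2 < 𝒬.φ i p.1
    then (𝒬.f i p.1).map (fun y => (y, p.2))
    else (𝒬'.f i p.2).map (fun y => (p.1, y))

/-! ## Quasi-tensor product -/

/-- The (inverse-free) quasi-tensor product of two quasi-crystals of the same type. -/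
noncomputable def QC.qtensor {S : QCSetting V ι} {Q Q' : Type*} (𝒬 : QC S Q) (𝒬' : QC S Q') :
    QC S (Q × Q') where
  wt p := 𝒬.wt p.1 + 𝒬'.wt p.2
  ε i p := if 0 < 𝒬.φ i p.1 ∧ 0 < 𝒬'.ε i p.2 then ⊤
    else max (𝒬.ε i p.1) (𝒬'.ε i p.2 + ((-(S.pair (𝒬.wt p.1) i) : ℤ) : WithTop ℤ))
  φ i p := if 0 < 𝒬.φ i p.1 ∧ 0 < 𝒬'.ε i p.2 then ⊤
    else max (𝒬.φ i p.1 + ((S.pair (𝒬'.wt p.2) i : ℤ) : WithTop ℤ)) (𝒬'.φ i p.2)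
  e i p := if 0 < 𝒬.φ i p.1 ∧ 0 < 𝒬'.ε i p.2 then none
    else if 𝒬'.ε i p.2 ≤ 𝒬.φ i p.1 then (𝒬.e i p.1).map (fun y => (y, p.2))
    else (𝒬'.e i p.2).map (fun y => (p.1, y))
  f i p := if 0 < 𝒬.φ i p.1 ∧ 0 < 𝒬'.ε i p.2 then none
    else if 𝒬'.ε i p.2 < 𝒬.φ i p.1 then (𝒬.f i p.1).map (fun y => (y, p.2))
    else (𝒬'.f i p.2).map (fun y => (p.1, y))

/-! ## Homomorphisms -/

/-- A quasi-crystal homomorphism `ψ : 𝒬 → 𝒬'`, i.e. a map `Q ⊔ {⊥} → Q' ⊔ {⊥}`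
(realized on `Option`s, `none` playing the role of `⊥`) compatible with the structure
maps in the appropriate sense. -/
structure QCHom {S : QCSetting V ι} {Q Q' : Type*} (𝒬 : QC S Q) (𝒬' : QC S Q') where
  toFun : Option Q → Option Q'
  map_none : toFun none = none
  wt_eq : ∀ x y, toFun (some x) = some y → 𝒬'.wt y = 𝒬.wt x
  eps_eq : ∀ i x y, toFun (some x) = some y → 𝒬'.ε i y = 𝒬.ε i x
  phi_eq : ∀ i x y, toFun (some x) = some y → 𝒬'.φ i y = 𝒬.φ i x
  comm_e : ∀ i x x' y y', 𝒬.e i x = some x' → toFun (some x) = some y →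
    toFun (some x') = some y' → 𝒬'.e i y = some y'
  comm_f : ∀ i x x' y y', 𝒬.f i x = some x' → toFun (some x) = some y →
    toFun (some x') = some y' → 𝒬'.f i y = some y'

/-! ## The free `⊗`-quasi-crystal monoid -/

/-- Weight of a word: the sum of the weights of its letters. -/
def freeWt {S : QCSetting V ι} {Q : Type*} (𝒬 : QC S Q) : List Q → S.Λ
  | [] => 0
  | x :: w => 𝒬.wt x + freeWt 𝒬 w

/-- The map `ε̈_i` of the free `⊗`-quasi-crystal monoid. -/
def freeEps {S : QCSetting V ι} {Q : Type*} (𝒬 : QC S Q) (i : ι) : List Q → WithTop ℤ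
  | [] => 0
  | x :: w => max (𝒬.ε i x) (freeEps 𝒬 i w + ((-(S.pair (𝒬.wt x) i) : ℤ) : WithTop ℤ))

/-- The map `φ̈_i` of the free `⊗`-quasi-crystal monoid. -/
def freePhi {S : QCSetting V ι} {Q : Type*} (𝒬 : QC S Q) (i : ι) : List Q → WithTop ℤ
  | [] => 0
  | x :: w => max (𝒬.φ i x + ((S.pair (freeWt 𝒬 w) i : ℤ) : WithTop ℤ)) (freePhi 𝒬 i w)

/-- The operator `ë_i` of the free `⊗`-quasi-crystal monoid. -/
noncomputable def freeE {S : QCSetting V ι} {Q : Type*} (𝒬 : QC S Q) (i : ι) : List Q → Option (List Q)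
  | [] => none
  | x :: w => if freeEps 𝒬 i w ≤ 𝒬.φ i x
      then (𝒬.e i x).map (· :: w)
      else (freeE 𝒬 i w).map (x :: ·)

/-- The operator `f̈_i` of the free `⊗`-quasi-crystal monoid. -/
noncomputable def freeF {S : QCSetting V ι} {Q : Type*} (𝒬 : QC S Q) (i : ι) : List Q → Option (List Q)
  | [] => none
  | x :: w => if freeEps 𝒬 i w < 𝒬.φ i x
      then (𝒬.f i x).map (· :: w)
      else (freeF 𝒬 i w).map (x :: ·)

/-- The quasi-crystal structure of the free `⊗`-quasi-crystal monoid `F^⊗(𝒬)`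
on the free monoid `Q*`. -/
noncomputable def freeTensorQC {S : QCSetting V ι} {Q : Type*} (𝒬 : QC S Q) : QC S (FreeMonoid Q) where
  wt w := freeWt 𝒬 (FreeMonoid.toList w)
  ε i w := freeEps 𝒬 i (FreeMonoid.toList w)
  φ i w := freePhi 𝒬 i (FreeMonoid.toList w)
  e i w := (freeE 𝒬 i (FreeMonoid.toList w)).map (fun l => FreeMonoid.ofList l)
  f i w := (freeF 𝒬 i (FreeMonoid.toList w)).map (fun l => FreeMonoid.ofList l)

/-! ## The free `⊗̈`-quasi-crystal monoid -/

/-- The map `ε̈_i` of the free `⊗̈`-quasi-crystal monoid. -/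
noncomputable def qfreeEps {S : QCSetting V ι} {Q : Type*} (𝒬 : QC S Q) (i : ι) : List Q → WithTop ℤ
  | [] => 0
  | x :: w => if 0 < 𝒬.φ i x ∧ 0 < qfreeEps 𝒬 i w then ⊤
      else max (𝒬.ε i x) (qfreeEps 𝒬 i w + ((-(S.pair (𝒬.wt x) i) : ℤ) : WithTop ℤ))

/-- The map `φ̈_i` of the free `⊗̈`-quasi-crystal monoid. -/
noncomputable def qfreePhi {S : QCSetting V ι} {Q : Type*} (𝒬 : QC S Q) (i : ι) : List Q → WithTop ℤ
  | [] => 0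
  | x :: w => if 0 < 𝒬.φ i x ∧ 0 < qfreeEps 𝒬 i w then ⊤
      else max (𝒬.φ i x + ((S.pair (freeWt 𝒬 w) i : ℤ) : WithTop ℤ)) (qfreePhi 𝒬 i w)

/-- The operator `ë_i` of the free `⊗̈`-quasi-crystal monoid. -/
noncomputable def qfreeE {S : QCSetting V ι} {Q : Type*} (𝒬 : QC S Q) (i : ι) : List Q → Option (List Q)
  | [] => none
  | x :: w => if 0 < 𝒬.φ i x ∧ 0 < qfreeEps 𝒬 i w then none
      else if qfreeEps 𝒬 i w ≤ 𝒬.φ i x then (𝒬.e i x).map (· :: w)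
      else (qfreeE 𝒬 i w).map (x :: ·)

/-- The operator `f̈_i` of the free `⊗̈`-quasi-crystal monoid. -/
noncomputable def qfreeF {S : QCSetting V ι} {Q : Type*} (𝒬 : QC S Q) (i : ι) : List Q → Option (List Q)
  | [] => none
  | x :: w => if 0 < 𝒬.φ i x ∧ 0 < qfreeEps 𝒬 i w then none
      else if qfreeEps 𝒬 i w < 𝒬.φ i x then (𝒬.f i x).map (· :: w)
      else (qfreeF 𝒬 i w).map (x :: ·)

/-- The quasi-crystal structure of the free `⊗̈`-quasi-crystal monoid `F^⊗̈(𝒬)`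
on the free monoid `Q*`. -/
noncomputable def freeQTensorQC {S : QCSetting V ι} {Q : Type*} (𝒬 : QC S Q) : QC S (FreeMonoid Q) where
  wt w := freeWt 𝒬 (FreeMonoid.toList w)
  ε i w := qfreeEps 𝒬 i (FreeMonoid.toList w)
  φ i w := qfreePhi 𝒬 i (FreeMonoid.toList w)
  e i w := (qfreeE 𝒬 i (FreeMonoid.toList w)).map (fun l => FreeMonoid.ofList l)
  f i w := (qfreeF 𝒬 i (FreeMonoid.toList w)).map (fun l => FreeMonoid.ofList l)

/-! ## Connected components, plactic and hypoplactic congruences -/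

/-- Two elements are connected in the quasi-crystal graph if they are related by the
reflexive-symmetric-transitive closure of the edge relation given by the
quasi-Kashiwara operators. -/
def QC.conn {S : QCSetting V ι} {Q : Type*} (𝒬 : QC S Q) : Q → Q → Prop :=
  Relation.EqvGen (fun x y => ∃ i, 𝒬.f i x = some y ∨ 𝒬.f i y = some x ∨
    𝒬.e i x = some y ∨ 𝒬.e i y = some x)

/-- The connected component `𝒬(x)` of a quasi-crystal `𝒬` containing `x`, as a
quasi-crystal on the subtype of elements connected with `x`. -/
def QC.compQC {S : QCSetting V ι} {Q : Type*} (𝒬 : QC S Q) (x : Q) :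
    QC S {y : Q // 𝒬.conn x y} where
  wt y := 𝒬.wt y.1
  ε i y := 𝒬.ε i y.1
  φ i y := 𝒬.φ i y.1
  e i y := (𝒬.e i y.1).pmap (fun z hz => (⟨z, hz⟩ : {y : Q // 𝒬.conn x y}))
    (fun z hz => Relation.EqvGen.trans _ _ _ y.2
      (Relation.EqvGen.rel _ _ ⟨i, Or.inr (Or.inr (Or.inl hz))⟩))
  f i y := (𝒬.f i y.1).pmap (fun z hz => (⟨z, hz⟩ : {y : Q // 𝒬.conn x y}))
    (fun z hz => Relation.EqvGen.trans _ _ _ y.2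
      (Relation.EqvGen.rel _ _ ⟨i, Or.inl hz⟩))

/-- The plactic congruence: `u ≈ v` iff there is a quasi-crystal isomorphism between the
connected components of `u` and `v` in `F^⊗(𝒬)` mapping `u` to `v`. -/
def placticRel {S : QCSetting V ι} {Q : Type*} (𝒬 : QC S Q)
    (u v : FreeMonoid Q) : Prop :=
  ∃ ψ : QCHom ((freeTensorQC 𝒬).compQC u) ((freeTensorQC 𝒬).compQC v),
    Function.Bijective ψ.toFun ∧
    ψ.toFun (some ⟨u, Relation.EqvGen.refl u⟩) = some ⟨v, Relation.EqvGen.refl v⟩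

/-- The hypoplactic congruence: `u ∼̈ v` iff there is a quasi-crystal isomorphism between
the connected components of `u` and `v` in `F^⊗̈(𝒬)` mapping `u` to `v`. -/
def hypoRel {S : QCSetting V ι} {Q : Type*} (𝒬 : QC S Q)
    (u v : FreeMonoid Q) : Prop :=
  ∃ ψ : QCHom ((freeQTensorQC 𝒬).compQC u) ((freeQTensorQC 𝒬).compQC v),
    Function.Bijective ψ.toFun ∧
    ψ.toFun (some ⟨u, Relation.EqvGen.refl u⟩) = some ⟨v, Relation.EqvGen.refl v⟩

/-! ## Quasi-crystal monoids -/

/-- A monoid is equidivisible if whenever `x₁y₁ = x₂y₂` one of the factorizations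
refines the other. -/
def Equidivisible (M : Type*) [Monoid M] : Prop :=
  ∀ x₁ x₂ y₁ y₂ : M, x₁ * y₁ = x₂ * y₂ →
    ∃ z : M, (x₂ = x₁ * z ∧ y₁ = z * y₂) ∨ (x₁ = x₂ * z ∧ y₂ = z * y₁)

/-- A `⊗`-quasi-crystal monoid: a seminormal quasi-crystal structure on a monoid whose
structure maps interact with the multiplication by the tensor-product rules. -/
structure IsTensorQCMon {S : QCSetting V ι} {M : Type*} [Monoid M] (𝒬 : QC S M) : Prop where
  seminormal : 𝒬.IsSeminormal
  wt_mul : ∀ x y, 𝒬.wt (x * y) = 𝒬.wt x + 𝒬.wt y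
  eps_mul : ∀ i x y, 𝒬.ε i (x * y) =
    max (𝒬.ε i x) (𝒬.ε i y + ((-(S.pair (𝒬.wt x) i) : ℤ) : WithTop ℤ))
  phi_mul : ∀ i x y, 𝒬.φ i (x * y) =
    max (𝒬.φ i x + ((S.pair (𝒬.wt y) i : ℤ) : WithTop ℤ)) (𝒬.φ i y)
  e_mul : ∀ i x y, 𝒬.e i (x * y) =
    if 𝒬.ε i y ≤ 𝒬.φ i x then (𝒬.e i x).map (· * y) else (𝒬.e i y).map (x * ·)
  f_mul : ∀ i x y, 𝒬.f i (x * y) =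
    if 𝒬.ε i y < 𝒬.φ i x then (𝒬.f i x).map (· * y) else (𝒬.f i y).map (x * ·)

/-- A `⊗̈`-quasi-crystal monoid: a seminormal quasi-crystal structure on a monoid such
that `x ⊗̈ y ↦ x·y` induces a quasi-crystal homomorphism `M ⊗̈ M → M`. -/
def IsQTensorQCMon {S : QCSetting V ι} {M : Type*} [Monoid M] (𝒬 : QC S M) : Prop :=
  𝒬.IsSeminormal ∧
  ∃ ψ : QCHom (𝒬.qtensor 𝒬) 𝒬, ψ.toFun = Option.map (fun p => p.1 * p.2)

/-! ## The bicyclic monoid with zero `B₀` and the monoid `Z₀` -/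

/-- The bicyclic monoid `⟨−, + | (+)(−) = ε⟩`: elements are normal forms `(−)^a(+)^b`. -/
structure Bic where
  neg : ℕ
  pos : ℕ
deriving DecidableEq

instance : Mul Bic :=
  ⟨fun x y => ⟨x.neg + (y.neg - x.pos), y.pos + (x.pos - y.neg)⟩⟩

theorem Bic.mul_def (x y : Bic) :
    x * y = ⟨x.neg + (y.neg - x.pos), y.pos + (x.pos - y.neg)⟩ := rfl

instance : One Bic := ⟨⟨0, 0⟩⟩

theorem Bic.one_def : (1 : Bic) = ⟨0, 0⟩ := rfl

instance : Monoid Bic where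
  mul_assoc x y z := by
    simp only [Bic.mul_def, Bic.mk.injEq]
    omega
  one_mul x := by
    simp only [Bic.one_def, Bic.mul_def]
    cases x
    simp only [Bic.mk.injEq]
    omega
  mul_one x := by
    simp only [Bic.one_def, Bic.mul_def]
    cases x
    simp only [Bic.mk.injEq]
    omega

/-- The bicyclic monoid with a zero element adjoined,
`B₀ = ⟨0, −, + | (+)(−) = ε, 0x = x0 = 0⟩`. -/
abbrev B0 : Type := WithZero Bic

/-- The monoid `Z₀ = ⟨0, −, + | (+)(−) = 0, 0x = x0 = 0⟩`: the nonzero elements are the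
normal forms `(−)^a(+)^b`. -/
inductive Z0 : Type
  | zero : Z0
  | word : ℕ → ℕ → Z0
deriving DecidableEq

instance : Mul Z0 :=
  ⟨fun x y => match x, y with
    | Z0.zero, _ => Z0.zero
    | _, Z0.zero => Z0.zero
    | Z0.word a b, Z0.word c d =>
        if 0 < b ∧ 0 < c then Z0.zero else Z0.word (a + c) (b + d)⟩

instance : One Z0 := ⟨Z0.word 0 0⟩

instance : Zero Z0 := ⟨Z0.zero⟩

theorem Z0.one_def : (1 : Z0) = Z0.word 0 0 := rfl
theorem Z0.zero_def : (0 : Z0) = Z0.zero := rfl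
theorem Z0.zero_mul' (x : Z0) : Z0.zero * x = Z0.zero := by cases x <;> rfl
theorem Z0.mul_zero' (x : Z0) : x * Z0.zero = Z0.zero := by cases x <;> rfl
theorem Z0.word_mul_word (a b c d : ℕ) :
    Z0.word a b * Z0.word c d =
      if 0 < b ∧ 0 < c then Z0.zero else Z0.word (a + c) (b + d) := rfl

instance : MonoidWithZero Z0 where
  mul_assoc x y z := by
    cases x <;> cases y <;> cases z <;>
      simp only [Z0.zero_mul', Z0.mul_zero', Z0.word_mul_word]
    · split_ifs <;> simp_all [Z0.zero_mul', Z0.mul_zero', Z0.word_mul_word] <;>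
        split_ifs <;> simp_all <;> omega
  one_mul x := by
    cases x
    · rfl
    · simp [Z0.one_def, Z0.word_mul_word]
  mul_one x := by
    cases x
    · rfl
    · simp [Z0.one_def, Z0.word_mul_word]
  zero_mul x := by cases x <;> rfl
  mul_zero x := by cases x <;> rfl

/-! ## Signature maps -/

/-- The `i`-signature map for the tensor product `⊗`:
`sgn_i^⊗(w) = 0` if `ε̈_i(w) = +∞`, and `(−)^{ε̈_i(w)}(+)^{φ̈_i(w)}` otherwise. -/
noncomputable def tsgn {V : Type*} [NormedAddCommGroup V] [InnerProductSpace ℝ V] {ι : Type*}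
    {S : QCSetting V ι} {Q : Type*} (𝒬 : QC S Q) (i : ι) (w : FreeMonoid Q) : B0 :=
  if freeEps 𝒬 i (FreeMonoid.toList w) = ⊤ then 0
  else ↑(Bic.mk (WithTop.untopD 0 (freeEps 𝒬 i (FreeMonoid.toList w))).toNat
      (WithTop.untopD 0 (freePhi 𝒬 i (FreeMonoid.toList w))).toNat)

/-- The `i`-signature map for the quasi-tensor product `⊗̈`:
`sgn_i^⊗̈(w) = 0` if `ε̈_i(w) = +∞`, and `(−)^{ε̈_i(w)}(+)^{φ̈_i(w)}` otherwise. -/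
noncomputable def qsgn {V : Type*} [NormedAddCommGroup V] [InnerProductSpace ℝ V] {ι : Type*}
    {S : QCSetting V ι} {Q : Type*} (𝒬 : QC S Q) (i : ι) (w : FreeMonoid Q) : Z0 :=
  if qfreeEps 𝒬 i (FreeMonoid.toList w) = ⊤ then 0
  else Z0.word (WithTop.untopD 0 (qfreeEps 𝒬 i (FreeMonoid.toList w))).toNat
      (WithTop.untopD 0 (qfreePhi 𝒬 i (FreeMonoid.toList w))).toNat


/-!
Under seminormality the `⊗̈` rules collapse: away from the loop case (`φ̈ x > 0` and
`ε̈ y > 0`) the string lengths of `x ⊗̈ y` are sums, `ë` acts on `y` exactly when `ε̈ y > 0`,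
and `f̈` acts on `x` exactly when `φ̈ x > 0`. In this form `⊗̈` is visibly associative, and
induction on words shows that concatenation `F^⊗̈(Q) ⊗̈ F^⊗̈(Q) → F^⊗̈(Q)` commutes with all
structure maps. It is injective on pairs whose first factors have a given length, and that
length is constant on components, so concatenation identifies the component of `(u, u')` in
`F^⊗̈(Q) ⊗̈ F^⊗̈(Q)` with the component of `uu'`. Isomorphisms of components witnessing
`u ∼̈ v` and `u' ∼̈ v'` combine into one between the components of `(u, u')` and `(v, v')`,
hence `uu' ∼̈ vv'`.

Since seminormality reads off from `ε̈` and `φ̈` where `ë` and `f̈` are defined, a bijective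
homomorphism of components commutes with them everywhere; so `∼̈` is isomorphism of pointed
components, an equivalence relation.
-/

theorem QCSetting.pair_add (S : QCSetting V ι) (μ ν : S.Λ) (i : ι) :
    S.pair (μ + ν) i = S.pair μ i + S.pair ν i := by
  have : ((S.pair (μ + ν) i : ℤ) : ℝ) = ((S.pair μ i + S.pair ν i : ℤ) : ℝ) := by
    push_cast
    simp only [S.pair_spec, AddSubgroup.coe_add, inner_add_left]
    ring
  exact_mod_cast this

theorem QCSetting.pair_zero (S : QCSetting V ι) (i : ι) : S.pair 0 i = 0 := by
  simpa using S.pair_add 0 0 i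

section OptIter

variable {Q : Type*} {g : Q → Option Q} {x : Q}

theorem optIter_one : optIter g 1 x = g x := rfl

theorem optIter_succ_eq_none (hx : g x = none) (n : ℕ) : optIter g (n + 1) x = none := by
  rw [optIter, Function.iterate_succ_apply, Option.bind_some, hx]
  exact Function.iterate_fixed rfl n

theorem eq_none_iff_of_isGreatest_optIter {n : ℕ}
    (hn : IsGreatest {k | (optIter g k x).isSome} n) : g x = none ↔ n = 0 := by
  constructor
  · intro hx
    obtain _ | n := n
    · rfl
    · simpa [optIter_succ_eq_none hx] using hn.1
  · rintro rfl
    by_contra hx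
    have : 1 ≤ 0 := hn.2 (show (optIter g 1 x).isSome by
      rwa [optIter_one, Option.isSome_iff_ne_none])
    omega

end OptIter

theorem WithTop.add_pos_iff_of_nonneg {a b : WithTop ℤ} (ha : 0 ≤ a) (hb : 0 ≤ b) :
    0 < a + b ↔ 0 < a ∨ 0 < b := by
  induction a using WithTop.recTopCoe <;> induction b using WithTop.recTopCoe <;> simp_all
  norm_cast at *
  omega

theorem WithTop.max_add_neg_eq_add {a b : WithTop ℤ} {p : ℤ} (ha : 0 ≤ a) (hb : 0 ≤ b)
    (hap : 0 ≤ a + p) (h : ¬(0 < a + p ∧ 0 < b)) : max a (b + ↑(-p)) = a + b := by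
  induction a using WithTop.recTopCoe <;> induction b using WithTop.recTopCoe <;> simp_all
  norm_cast at *
  omega

theorem WithTop.max_add_coe_eq_add {a b : WithTop ℤ} {p : ℤ} (ha : 0 ≤ a) (hb : 0 ≤ b)
    (h : ¬(0 < a ∧ 0 < b)) : max (a + p) (b + p) = a + (b + p) := by
  induction a using WithTop.recTopCoe <;> induction b using WithTop.recTopCoe <;> simp_all
  norm_cast at *
  omega

namespace QC

variable {S : QCSetting V ι} {A B C : Type*} {𝒜 : QC S A} {ℬ : QC S B} {𝒞 : QC S C}

/-- The pointwise consequences of seminormality used here; unlike seminormality itself, they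
are inherited by `⊗̈`-products (`IsWeaklySeminormalAt.qtensor`). -/
structure IsWeaklySeminormalAt (𝒜 : QC S A) (x : A) : Prop where
  eps_nonneg : ∀ i, 0 ≤ 𝒜.ε i x
  phi_nonneg : ∀ i, 0 ≤ 𝒜.φ i x
  phi_eq : ∀ i, 𝒜.φ i x = 𝒜.ε i x + S.pair (𝒜.wt x) i
  e_eq_none_iff : ∀ i, 𝒜.e i x = none ↔ 𝒜.ε i x = 0 ∨ 𝒜.ε i x = ⊤
  f_eq_none_iff : ∀ i, 𝒜.f i x = none ↔ 𝒜.φ i x = 0 ∨ 𝒜.φ i x = ⊤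

theorem IsSeminormal.isWeaklySeminormalAt (h : 𝒜.IsSeminormal) (x : A) :
    𝒜.IsWeaklySeminormalAt x := by
  have key i : (𝒜.ε i x = ⊤ ∧ 𝒜.φ i x = ⊤ ∧ 𝒜.e i x = none ∧ 𝒜.f i x = none) ∨
      ∃ n m : ℕ, 𝒜.ε i x = (n : ℤ) ∧ 𝒜.φ i x = (m : ℤ) ∧
        (𝒜.e i x = none ↔ n = 0) ∧ (𝒜.f i x = none ↔ m = 0) := by
    by_cases hx : 𝒜.ε i x = ⊤
    · exact Or.inl ⟨hx, by rw [h.phi_eq, hx, top_add], h.e_of_top i x hx, h.f_of_top i x hx⟩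
    · obtain ⟨n, hn, hgn⟩ := h.eps_spec i x hx
      obtain ⟨m, hm, hgm⟩ := h.phi_spec i x hx
      exact Or.inr ⟨n, m, hn, hm, eq_none_iff_of_isGreatest_optIter hgn,
        eq_none_iff_of_isGreatest_optIter hgm⟩
  refine ⟨fun i => ?_, fun i => ?_, fun i => h.phi_eq i x, fun i => ?_, fun i => ?_⟩ <;>
    rcases key i with ⟨he, hf, he', hf'⟩ | ⟨n, m, he, hf, he', hf'⟩ <;> simp [*]

section qtensor

variable {x : A} {y : B}

theorem qtensor_eps (hx : 𝒜.IsWeaklySeminormalAt x) (hy : ℬ.IsWeaklySeminormalAt y) (i : ι) :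
    (𝒜.qtensor ℬ).ε i (x, y) =
      if 0 < 𝒜.φ i x ∧ 0 < ℬ.ε i y then ⊤ else 𝒜.ε i x + ℬ.ε i y := by
  simp only [qtensor]
  split_ifs with hc
  · rfl
  · rw [hx.phi_eq] at hc
    exact WithTop.max_add_neg_eq_add (hx.eps_nonneg i) (hy.eps_nonneg i)
      (hx.phi_eq i ▸ hx.phi_nonneg i) hc

theorem qtensor_phi (hx : 𝒜.IsWeaklySeminormalAt x) (hy : ℬ.IsWeaklySeminormalAt y) (i : ι) :
    (𝒜.qtensor ℬ).φ i (x, y) =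
      if 0 < 𝒜.φ i x ∧ 0 < ℬ.ε i y then ⊤ else 𝒜.φ i x + ℬ.φ i y := by
  simp only [qtensor]
  split_ifs with hc
  · rfl
  · rw [hy.phi_eq]
    exact WithTop.max_add_coe_eq_add (hx.phi_nonneg i) (hy.eps_nonneg i) hc

theorem qtensor_e (hx : 𝒜.IsWeaklySeminormalAt x) (hy : ℬ.IsWeaklySeminormalAt y) (i : ι) :
    (𝒜.qtensor ℬ).e i (x, y) =
      if 0 < ℬ.ε i y then (if 0 < 𝒜.φ i x then none else (ℬ.e i y).map (x, ·))
      else (𝒜.e i x).map (·, y) := by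
  simp only [qtensor]
  rcases (hy.eps_nonneg i).eq_or_lt with hε | hε
  · simp [← hε, hx.phi_nonneg i]
  rcases (hx.phi_nonneg i).eq_or_lt with hφ | hφ
  · simp [← hφ, hε, hε.not_ge]
  · simp [hφ, hε]

theorem qtensor_f (hx : 𝒜.IsWeaklySeminormalAt x) (hy : ℬ.IsWeaklySeminormalAt y) (i : ι) :
    (𝒜.qtensor ℬ).f i (x, y) =
      if 0 < 𝒜.φ i x then (if 0 < ℬ.ε i y then none else (𝒜.f i x).map (·, y))
      else (ℬ.f i y).map (x, ·) := by
  simp only [qtensor]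
  rcases (hx.phi_nonneg i).eq_or_lt with hφ | hφ
  · simp [← hφ, (hy.eps_nonneg i).not_gt]
  rcases (hy.eps_nonneg i).eq_or_lt with hε | hε
  · simp [← hε, hφ]
  · simp [hφ, hε]

theorem IsWeaklySeminormalAt.qtensor (hx : 𝒜.IsWeaklySeminormalAt x)
    (hy : ℬ.IsWeaklySeminormalAt y) : (𝒜.qtensor ℬ).IsWeaklySeminormalAt (x, y) where
  eps_nonneg i := by
    rw [qtensor_eps hx hy]
    split_ifs
    exacts [le_top, add_nonneg (hx.eps_nonneg i) (hy.eps_nonneg i)]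
  phi_nonneg i := by
    rw [qtensor_phi hx hy]
    split_ifs
    exacts [le_top, add_nonneg (hx.phi_nonneg i) (hy.phi_nonneg i)]
  phi_eq i := by
    rw [qtensor_eps hx hy, qtensor_phi hx hy]
    split_ifs
    · rfl
    · show _ = _ + ((S.pair (𝒜.wt x + ℬ.wt y) i : ℤ) : WithTop ℤ)
      rw [hx.phi_eq, hy.phi_eq, S.pair_add, WithTop.coe_add]
      abel
  e_eq_none_iff i := by
    rw [qtensor_e hx hy, qtensor_eps hx hy]
    rcases (hy.eps_nonneg i).eq_or_lt with hε | hε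
    · simp [← hε, hx.e_eq_none_iff]
    rcases (hx.phi_nonneg i).eq_or_lt with hφ | hφ
    · have hεx : 𝒜.ε i x ≠ ⊤ := fun h => by simp [hx.phi_eq, h] at hφ
      simp [← hφ, hε, hy.e_eq_none_iff, hε.ne', hεx,
        (hε.trans_le (le_add_of_nonneg_left (hx.eps_nonneg i))).ne']
    · simp [hφ, hε]
  f_eq_none_iff i := by
    rw [qtensor_f hx hy, qtensor_phi hx hy]
    rcases (hx.phi_nonneg i).eq_or_lt with hφ | hφ
    · simp [← hφ, hy.f_eq_none_iff]
    rcases (hy.eps_nonneg i).eq_or_lt with hε | hε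
    · have hφy : ℬ.φ i y ≠ ⊤ := by simp [hy.phi_eq, ← hε]
      simp [← hε, hφ, hx.f_eq_none_iff, hφ.ne', hφy,
        (hφ.trans_le (le_add_of_nonneg_right (hy.phi_nonneg i))).ne']
    · simp [hφ, hε]

end qtensor

section StrictMorphism

structure IsStrictAt (𝒜 : QC S A) (ℬ : QC S B) (g : A → B) (x : A) : Prop where
  wt_apply : ℬ.wt (g x) = 𝒜.wt x
  eps_apply : ∀ i, ℬ.ε i (g x) = 𝒜.ε i x
  phi_apply : ∀ i, ℬ.φ i (g x) = 𝒜.φ i x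
  e_apply : ∀ i, ℬ.e i (g x) = (𝒜.e i x).map g
  f_apply : ∀ i, ℬ.f i (g x) = (𝒜.f i x).map g

def IsStrictMorphism (𝒜 : QC S A) (ℬ : QC S B) (g : A → B) : Prop :=
  ∀ x, IsStrictAt 𝒜 ℬ g x

variable {g : A → B} {h : B → C} {x : A}

theorem IsStrictAt.comp (hh : IsStrictAt ℬ 𝒞 h (g x)) (hg : IsStrictAt 𝒜 ℬ g x) :
    IsStrictAt 𝒜 𝒞 (h ∘ g) x where
  wt_apply := hh.wt_apply.trans hg.wt_apply
  eps_apply i := (hh.eps_apply i).trans (hg.eps_apply i)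
  phi_apply i := (hh.phi_apply i).trans (hg.phi_apply i)
  e_apply i := by simp [hh.e_apply, hg.e_apply, Option.map_map]
  f_apply i := by simp [hh.f_apply, hg.f_apply, Option.map_map]

theorem IsStrictAt.of_comp (hg : IsStrictAt 𝒜 ℬ g x) (hhg : IsStrictAt 𝒜 𝒞 (h ∘ g) x) :
    IsStrictAt ℬ 𝒞 h (g x) where
  wt_apply := hhg.wt_apply.trans hg.wt_apply.symm
  eps_apply i := (hhg.eps_apply i).trans (hg.eps_apply i).symm
  phi_apply i := (hhg.phi_apply i).trans (hg.phi_apply i).symm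
  e_apply i := by rw [hg.e_apply, Option.map_map]; exact hhg.e_apply i
  f_apply i := by rw [hg.f_apply, Option.map_map]; exact hhg.f_apply i

theorem IsStrictAt.of_comp_left (hh : IsStrictAt ℬ 𝒞 h (g x)) (hinj : Function.Injective h)
    (hhg : IsStrictAt 𝒜 𝒞 (h ∘ g) x) : IsStrictAt 𝒜 ℬ g x where
  wt_apply := hh.wt_apply.symm.trans hhg.wt_apply
  eps_apply i := (hh.eps_apply i).symm.trans (hhg.eps_apply i)
  phi_apply i := (hh.phi_apply i).symm.trans (hhg.phi_apply i)
  e_apply i := Option.map_injective hinj <| by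
    rw [← hh.e_apply, Option.map_map]; exact hhg.e_apply i
  f_apply i := Option.map_injective hinj <| by
    rw [← hh.f_apply, Option.map_map]; exact hhg.f_apply i

theorem IsStrictAt.prodMap {A' B' : Type*} {𝒜' : QC S A'} {ℬ' : QC S B'} {g : A → A'}
    {g' : B → B'} {y : B} (hg : IsStrictAt 𝒜 𝒜' g x) (hg' : IsStrictAt ℬ ℬ' g' y) :
    IsStrictAt (𝒜.qtensor ℬ) (𝒜'.qtensor ℬ') (Prod.map g g') (x, y) where
  wt_apply := congrArg₂ (· + ·) hg.wt_apply hg'.wt_apply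
  eps_apply i := by simp [qtensor, hg.eps_apply, hg.phi_apply, hg'.eps_apply, hg.wt_apply]
  phi_apply i := by simp [qtensor, hg.phi_apply, hg'.eps_apply, hg'.phi_apply, hg'.wt_apply]
  e_apply i := by
    simp only [qtensor, Prod.map_fst, Prod.map_snd, hg.phi_apply, hg'.eps_apply, hg.e_apply,
      hg'.e_apply]
    split_ifs <;> simp [Option.map_map, Function.comp_def]
  f_apply i := by
    simp only [qtensor, Prod.map_fst, Prod.map_snd, hg.phi_apply, hg'.eps_apply, hg.f_apply,
      hg'.f_apply]
    split_ifs <;> simp [Option.map_map, Function.comp_def]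

theorem IsStrictAt.isWeaklySeminormalAt_iff (hg : IsStrictAt 𝒜 ℬ g x) :
    ℬ.IsWeaklySeminormalAt (g x) ↔ 𝒜.IsWeaklySeminormalAt x := by
  constructor <;> rintro ⟨h₁, h₂, h₃, h₄, h₅⟩ <;> constructor <;>
    simp_all [hg.wt_apply, hg.eps_apply, hg.phi_apply, hg.e_apply, hg.f_apply]

theorem isStrictMorphism_id : IsStrictMorphism 𝒜 𝒜 id := fun _ =>
  ⟨rfl, fun _ => rfl, fun _ => rfl, fun _ => by simp, fun _ => by simp⟩

theorem IsStrictMorphism.comp (hh : IsStrictMorphism ℬ 𝒞 h) (hg : IsStrictMorphism 𝒜 ℬ g) :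
    IsStrictMorphism 𝒜 𝒞 (h ∘ g) := fun x => (hh (g x)).comp (hg x)

theorem IsStrictMorphism.symm {Φ : A ≃ B} (hΦ : IsStrictMorphism 𝒜 ℬ Φ) :
    IsStrictMorphism ℬ 𝒜 Φ.symm := fun y => by
  simpa using (hΦ (Φ.symm y)).of_comp (h := Φ.symm) (by simpa using isStrictMorphism_id _)

theorem _root_.Option.map_val_pmap_mk {p : A → Prop} (o : Option A)
    (H : ∀ a, o = some a → p a) : (o.pmap Subtype.mk H).map Subtype.val = o := by
  cases o <;> rfl

theorem isStrictMorphism_compQC_val (𝒜 : QC S A) (x : A) :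
    IsStrictMorphism (𝒜.compQC x) 𝒜 Subtype.val := fun _ =>
  ⟨rfl, fun _ => rfl, fun _ => rfl, fun _ => (Option.map_val_pmap_mk _ _).symm,
    fun _ => (Option.map_val_pmap_mk _ _).symm⟩

theorem IsWeaklySeminormalAt.compQC {a : {b // 𝒜.conn x b}}
    (h : 𝒜.IsWeaklySeminormalAt a.1) : (𝒜.compQC x).IsWeaklySeminormalAt a :=
  (isStrictMorphism_compQC_val 𝒜 x a).isWeaklySeminormalAt_iff.mp h

theorem isStrictAt_prodAssoc_symm {a : B} {b : C} (hx : 𝒜.IsWeaklySeminormalAt x)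
    (ha : ℬ.IsWeaklySeminormalAt a) (hb : 𝒞.IsWeaklySeminormalAt b) :
    IsStrictAt (𝒜.qtensor (ℬ.qtensor 𝒞)) ((𝒜.qtensor ℬ).qtensor 𝒞)
      (Equiv.prodAssoc A B C).symm (x, (a, b)) := by
  set L := (𝒜.qtensor ℬ).qtensor 𝒞
  set R := 𝒜.qtensor (ℬ.qtensor 𝒞)
  have key i : L.ε i ((x, a), b) = R.ε i (x, (a, b)) ∧
      L.e i ((x, a), b) = (R.e i (x, (a, b))).map (Equiv.prodAssoc A B C).symm ∧
      L.f i ((x, a), b) = (R.f i (x, (a, b))).map (Equiv.prodAssoc A B C).symm := by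
    rw [qtensor_eps (hx.qtensor ha) hb, qtensor_eps hx (ha.qtensor hb),
      qtensor_e (hx.qtensor ha) hb, qtensor_e hx (ha.qtensor hb), qtensor_f (hx.qtensor ha) hb,
      qtensor_f hx (ha.qtensor hb), qtensor_eps hx ha, qtensor_phi hx ha, qtensor_e hx ha,
      qtensor_f hx ha, qtensor_eps ha hb, qtensor_e ha hb, qtensor_f ha hb]
    simp only [apply_ite (Option.map _), Option.map_none, Option.map_map, Function.comp_def,
      Equiv.prodAssoc_symm_apply]
    have h₁ := hx.phi_nonneg i
    have h₂ := ha.eps_nonneg i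
    have h₃ := ha.phi_nonneg i
    have h₄ := hb.eps_nonneg i
    generalize 𝒜.φ i x = φx, ℬ.ε i a = εa, ℬ.φ i a = φa, 𝒞.ε i b = εb at *
    rcases h₁.eq_or_lt with rfl | h₁ <;> rcases h₂.eq_or_lt with rfl | h₂ <;>
      rcases h₃.eq_or_lt with rfl | h₃ <;> rcases h₄.eq_or_lt with rfl | h₄ <;>
      simp_all [WithTop.add_pos_iff_of_nonneg, add_assoc]
  have wt : L.wt ((x, a), b) = R.wt (x, (a, b)) := add_assoc _ _ _
  refine ⟨wt, fun i => (key i).1, fun i => ?_, fun i => (key i).2.1, fun i => (key i).2.2⟩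
  show L.φ i ((x, a), b) = _
  rw [((hx.qtensor ha).qtensor hb).phi_eq, (hx.qtensor (ha.qtensor hb)).phi_eq, (key i).1, wt]

end StrictMorphism

section Adj

def Adj (𝒜 : QC S A) (x y : A) : Prop :=
  ∃ i, 𝒜.f i x = some y ∨ 𝒜.f i y = some x ∨ 𝒜.e i x = some y ∨ 𝒜.e i y = some x

variable {x y z : A}

theorem Adj.symm : 𝒜.Adj x y → 𝒜.Adj y x := fun ⟨i, h⟩ => ⟨i, by tauto⟩

theorem Adj.conn (h : 𝒜.Adj x y) : 𝒜.conn x y := .rel _ _ h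

theorem conn_iff_reflTransGen : 𝒜.conn x y ↔ Relation.ReflTransGen 𝒜.Adj x y := by
  have : Std.Symm 𝒜.Adj := ⟨fun _ _ => Adj.symm⟩
  rw [← Relation.EqvGen.eqvGen_eq_reflTransGen]
  rfl

theorem conn.trans_adj (hxy : 𝒜.conn x y) (hyz : 𝒜.Adj y z) : 𝒜.conn x z :=
  .trans _ _ _ hxy hyz.conn

theorem conn.apply_eq_of_forall_adj {K : Type*} {κ : A → K}
    (hκ : ∀ a b, 𝒜.Adj a b → κ a = κ b) (h : 𝒜.conn x y) : κ x = κ y := by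
  induction h with
  | rel a b hab => exact hκ a b hab
  | refl => rfl
  | symm _ _ _ ih => exact ih.symm
  | trans _ _ _ _ _ ih₁ ih₂ => exact ih₁.trans ih₂

theorem qtensor_e_eq_some {i : ι} {p q : A × B} (h : (𝒜.qtensor ℬ).e i p = some q) :
    (𝒜.e i p.1 = some q.1 ∧ q.2 = p.2) ∨ (q.1 = p.1 ∧ ℬ.e i p.2 = some q.2) := by
  simp only [qtensor] at h
  split_ifs at h <;> obtain ⟨c, hc, rfl⟩ := Option.map_eq_some_iff.mp h
  exacts [Or.inl ⟨hc, rfl⟩, Or.inr ⟨rfl, hc⟩]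

theorem qtensor_f_eq_some {i : ι} {p q : A × B} (h : (𝒜.qtensor ℬ).f i p = some q) :
    (𝒜.f i p.1 = some q.1 ∧ q.2 = p.2) ∨ (q.1 = p.1 ∧ ℬ.f i p.2 = some q.2) := by
  simp only [qtensor] at h
  split_ifs at h <;> obtain ⟨c, hc, rfl⟩ := Option.map_eq_some_iff.mp h
  exacts [Or.inl ⟨hc, rfl⟩, Or.inr ⟨rfl, hc⟩]

theorem Adj.qtensor_cases {p q : A × B} (h : (𝒜.qtensor ℬ).Adj p q) :
    (𝒜.Adj p.1 q.1 ∧ p.2 = q.2) ∨ (p.1 = q.1 ∧ ℬ.Adj p.2 q.2) := by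
  obtain ⟨i, h | h | h | h⟩ := h
  · rcases qtensor_f_eq_some h with ⟨h₁, h₂⟩ | ⟨h₁, h₂⟩
    exacts [Or.inl ⟨⟨i, Or.inl h₁⟩, h₂.symm⟩, Or.inr ⟨h₁.symm, ⟨i, Or.inl h₂⟩⟩]
  · rcases qtensor_f_eq_some h with ⟨h₁, h₂⟩ | ⟨h₁, h₂⟩
    exacts [Or.inl ⟨⟨i, Or.inr (Or.inl h₁)⟩, h₂⟩, Or.inr ⟨h₁, ⟨i, Or.inr (Or.inl h₂)⟩⟩]
  · rcases qtensor_e_eq_some h with ⟨h₁, h₂⟩ | ⟨h₁, h₂⟩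
    exacts [Or.inl ⟨⟨i, Or.inr (Or.inr (Or.inl h₁))⟩, h₂.symm⟩,
      Or.inr ⟨h₁.symm, ⟨i, Or.inr (Or.inr (Or.inl h₂))⟩⟩]
  · rcases qtensor_e_eq_some h with ⟨h₁, h₂⟩ | ⟨h₁, h₂⟩
    exacts [Or.inl ⟨⟨i, Or.inr (Or.inr (Or.inr h₁))⟩, h₂⟩,
      Or.inr ⟨h₁, ⟨i, Or.inr (Or.inr (Or.inr h₂))⟩⟩]

end Adj

section Lifting

variable {g : A → B} {x y : A} {z : B}

theorem IsStrictMorphism.map_adj (hg : IsStrictMorphism 𝒜 ℬ g) (h : 𝒜.Adj x y) :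
    ℬ.Adj (g x) (g y) := by
  obtain ⟨i, h | h | h | h⟩ := h <;> refine ⟨i, ?_⟩
  · exact Or.inl (by rw [(hg x).f_apply, h]; rfl)
  · exact Or.inr (Or.inl (by rw [(hg y).f_apply, h]; rfl))
  · exact Or.inr (Or.inr (Or.inl (by rw [(hg x).e_apply, h]; rfl)))
  · exact Or.inr (Or.inr (Or.inr (by rw [(hg y).e_apply, h]; rfl)))

theorem IsStrictMorphism.map_conn (hg : IsStrictMorphism 𝒜 ℬ g) (h : 𝒜.conn x y) :
    ℬ.conn (g x) (g y) := by
  induction h with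
  | rel a b hab => exact (hg.map_adj hab).conn
  | refl => exact .refl _
  | symm _ _ _ ih => exact .symm _ _ ih
  | trans _ _ _ _ _ ih₁ ih₂ => exact .trans _ _ _ ih₁ ih₂

variable {K : Type*} {κ : A → K}

theorem IsStrictMorphism.adj_of_map_adj (hg : IsStrictMorphism 𝒜 ℬ g)
    (hκ : ∀ a b, 𝒜.Adj a b → κ a = κ b) (hinj : ∀ a b, κ a = κ b → g a = g b → a = b)
    (hxy : κ x = κ y) (h : ℬ.Adj (g x) (g y)) : 𝒜.Adj x y := by
  have key {a b : A} (o : Option A) (ho : ∀ c, o = some c → 𝒜.Adj a c) (hab : κ a = κ b)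
      (h : o.map g = some (g b)) : o = some b := by
    obtain ⟨c, rfl, hc⟩ := Option.map_eq_some_iff.mp h
    rw [hinj c b ((hκ _ _ (ho c rfl)).symm.trans hab) hc]
  obtain ⟨i, h | h | h | h⟩ := h <;> refine ⟨i, ?_⟩
  · rw [(hg x).f_apply] at h
    exact Or.inl (key _ (fun c hc => ⟨i, Or.inl hc⟩) hxy h)
  · rw [(hg y).f_apply] at h
    exact Or.inr (Or.inl (key _ (fun c hc => ⟨i, Or.inl hc⟩) hxy.symm h))
  · rw [(hg x).e_apply] at h
    exact Or.inr (Or.inr (Or.inl (key _ (fun c hc => ⟨i, Or.inr (Or.inr (Or.inl hc))⟩) hxy h)))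
  · rw [(hg y).e_apply] at h
    exact Or.inr (Or.inr (Or.inr
      (key _ (fun c hc => ⟨i, Or.inr (Or.inr (Or.inl hc))⟩) hxy.symm h)))

theorem IsStrictMorphism.exists_conn_of_conn_map (hg : IsStrictMorphism 𝒜 ℬ g)
    (hκ : ∀ a b, 𝒜.Adj a b → κ a = κ b) (hinj : ∀ a b, κ a = κ b → g a = g b → a = b)
    (hclosed : ∀ a z, ℬ.Adj (g a) z → ∃ b, κ b = κ a ∧ g b = z) (h : ℬ.conn (g x) z) :
    ∃ y, 𝒜.conn x y ∧ g y = z := by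
  rw [conn_iff_reflTransGen] at h
  induction h with
  | refl => exact ⟨x, .refl x, rfl⟩
  | tail _ hadj ih =>
    obtain ⟨y, hxy, rfl⟩ := ih
    obtain ⟨b, hb, rfl⟩ := hclosed y _ hadj
    exact ⟨b, hxy.trans_adj (hg.adj_of_map_adj hκ hinj hb.symm hadj), rfl⟩

end Lifting

section ComponentIso

def ComponentIso (𝒜 : QC S A) (ℬ : QC S B) (x : A) (y : B) : Prop :=
  ∃ E : {a // 𝒜.conn x a} ≃ {b // ℬ.conn y b},
    IsStrictMorphism (𝒜.compQC x) (ℬ.compQC y) E ∧ E ⟨x, .refl x⟩ = ⟨y, .refl y⟩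

variable {x : A} {y : B} {z : C}

theorem ComponentIso.refl (𝒜 : QC S A) (x : A) : ComponentIso 𝒜 𝒜 x x :=
  ⟨Equiv.refl _, isStrictMorphism_id, rfl⟩

theorem ComponentIso.symm (h : ComponentIso 𝒜 ℬ x y) : ComponentIso ℬ 𝒜 y x := by
  obtain ⟨E, hE, hx⟩ := h
  exact ⟨E.symm, hE.symm, E.symm_apply_eq.mpr hx.symm⟩

theorem ComponentIso.trans (h₁ : ComponentIso 𝒜 ℬ x y) (h₂ : ComponentIso ℬ 𝒞 y z) :
    ComponentIso 𝒜 𝒞 x z := by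
  obtain ⟨E₁, hE₁, hx⟩ := h₁
  obtain ⟨E₂, hE₂, hy⟩ := h₂
  exact ⟨E₁.trans E₂, hE₂.comp hE₁, by simp [hx, hy]⟩

variable {K : Type*} {κ : A → K} {g : A → B}

/-- `κ` makes this applicable to concatenation of words, which is injective only on pairs
whose first factors have the same length. -/
theorem componentIso_of_isStrictMorphism (hg : IsStrictMorphism 𝒜 ℬ g)
    (hκ : ∀ a b, 𝒜.Adj a b → κ a = κ b) (hinj : ∀ a b, κ a = κ b → g a = g b → a = b)
    (hclosed : ∀ a z, ℬ.Adj (g a) z → ∃ b, κ b = κ a ∧ g b = z) (x : A) :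
    ComponentIso 𝒜 ℬ x (g x) := by
  let F : {a // 𝒜.conn x a} → {b // ℬ.conn (g x) b} := fun a => ⟨g a, hg.map_conn a.2⟩
  have hF : Function.Bijective F := by
    refine ⟨fun a b hab => Subtype.ext ?_, fun b => ?_⟩
    · exact hinj a b ((a.2.apply_eq_of_forall_adj hκ).symm.trans (b.2.apply_eq_of_forall_adj hκ))
        (congrArg Subtype.val hab)
    · obtain ⟨a, ha, hab⟩ := hg.exists_conn_of_conn_map hκ hinj hclosed b.2
      exact ⟨⟨a, ha⟩, Subtype.ext hab⟩
  refine ⟨Equiv.ofBijective F hF, fun a => ?_, rfl⟩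
  exact ((isStrictMorphism_compQC_val ℬ (g x)) (F a)).of_comp_left Subtype.val_injective
    ((hg a).comp (isStrictMorphism_compQC_val 𝒜 x a))

theorem componentIso_of_injective (hg : IsStrictMorphism 𝒜 ℬ g) (hinj : Function.Injective g)
    (hclosed : ∀ a z, ℬ.Adj (g a) z → z ∈ Set.range g) (x : A) :
    ComponentIso 𝒜 ℬ x (g x) :=
  componentIso_of_isStrictMorphism (κ := fun _ => ()) hg (fun _ _ _ => rfl)
    (fun _ _ _ h => hinj h) (fun a z h => (hclosed a z h).imp fun _ hb => ⟨rfl, hb⟩) x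

theorem componentIso_qtensor_compQC (𝒜 : QC S A) (ℬ : QC S B) (x : A) (y : B) :
    ComponentIso ((𝒜.compQC x).qtensor (ℬ.compQC y)) (𝒜.qtensor ℬ)
      (⟨x, .refl x⟩, ⟨y, .refl y⟩) (x, y) := by
  refine componentIso_of_injective (g := Prod.map Subtype.val Subtype.val)
    (fun p => (isStrictMorphism_compQC_val 𝒜 x p.1).prodMap (isStrictMorphism_compQC_val ℬ y p.2))
    (Subtype.val_injective.prodMap Subtype.val_injective) (fun p q h => ?_) _
  rcases h.qtensor_cases with ⟨h₁, h₂⟩ | ⟨h₁, h₂⟩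
  · exact ⟨(⟨q.1, p.1.2.trans_adj h₁⟩, p.2), Prod.ext rfl h₂⟩
  · exact ⟨(p.1, ⟨q.2, p.2.2.trans_adj h₂⟩), Prod.ext h₁ rfl⟩

theorem ComponentIso.qtensor {A' B' : Type*} {𝒜' : QC S A'} {ℬ' : QC S B'} {x' : A'} {y' : B'}
    (h₁ : ComponentIso 𝒜 𝒜' x x') (h₂ : ComponentIso ℬ ℬ' y y') :
    ComponentIso (𝒜.qtensor ℬ) (𝒜'.qtensor ℬ') (x, y) (x', y') := by
  obtain ⟨E₁, hE₁, hx⟩ := h₁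
  obtain ⟨E₂, hE₂, hy⟩ := h₂
  have h := componentIso_of_injective (g := Prod.map E₁ E₂)
    (fun p => (hE₁ p.1).prodMap (hE₂ p.2)) (E₁.prodCongr E₂).injective
    (fun _ z _ => (E₁.prodCongr E₂).surjective z) (⟨x, .refl x⟩, ⟨y, .refl y⟩)
  rw [Prod.map_apply, hx, hy] at h
  exact (componentIso_qtensor_compQC 𝒜 ℬ x y).symm.trans
    (h.trans (componentIso_qtensor_compQC 𝒜' ℬ' x' y'))

end ComponentIso

section Hom

def IsStrictMorphism.toQCHom {E : A ≃ B} (hE : IsStrictMorphism 𝒜 ℬ E) : QCHom 𝒜 ℬ where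
  toFun := Option.map E
  map_none := rfl
  wt_eq x y h := Option.some.inj h ▸ (hE x).wt_apply
  eps_eq i x y h := Option.some.inj h ▸ (hE x).eps_apply i
  phi_eq i x y h := Option.some.inj h ▸ (hE x).phi_apply i
  comm_e i x x' y y' he h h' := by
    rw [← Option.some.inj h, ← Option.some.inj h', (hE x).e_apply, he]; rfl
  comm_f i x x' y y' hf h h' := by
    rw [← Option.some.inj h, ← Option.some.inj h', (hE x).f_apply, hf]; rfl

theorem _root_.QCHom.exists_isStrictMorphism (ψ : QCHom 𝒜 ℬ) (hψ : Function.Bijective ψ.toFun)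
    (h𝒜 : ∀ a, 𝒜.IsWeaklySeminormalAt a) (hℬ : ∀ b, ℬ.IsWeaklySeminormalAt b) :
    ∃ E : A ≃ B, IsStrictMorphism 𝒜 ℬ E ∧ ∀ a, ψ.toFun (some a) = some (E a) := by
  let E := (Equiv.ofBijective ψ.toFun hψ).removeNone
  have hE a : ψ.toFun (some a) = some (E a) := by
    refine (Equiv.removeNone_some (Equiv.ofBijective ψ.toFun hψ)
      (Option.ne_none_iff_exists'.mp fun h => ?_)).symm
    simpa using hψ.1 (h.trans ψ.map_none.symm)
  refine ⟨E, fun a => ⟨ψ.wt_eq _ _ (hE a), fun i => ψ.eps_eq i _ _ (hE a),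
    fun i => ψ.phi_eq i _ _ (hE a), fun i => ?_, fun i => ?_⟩, hE⟩
  · cases he : 𝒜.e i a with
    | some a' => exact ψ.comm_e i a a' _ _ he (hE a) (hE a')
    | none =>
      rw [Option.map_none, (hℬ _).e_eq_none_iff, ψ.eps_eq i _ _ (hE a)]
      exact ((h𝒜 a).e_eq_none_iff i).mp he
  · cases hf : 𝒜.f i a with
    | some a' => exact ψ.comm_f i a a' _ _ hf (hE a) (hE a')
    | none =>
      rw [Option.map_none, (hℬ _).f_eq_none_iff, ψ.phi_eq i _ _ (hE a)]
      exact ((h𝒜 a).f_eq_none_iff i).mp hf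

theorem componentIso_iff_exists_qcHom (h𝒜 : ∀ a, 𝒜.IsWeaklySeminormalAt a)
    (hℬ : ∀ b, ℬ.IsWeaklySeminormalAt b) {x : A} {y : B} :
    ComponentIso 𝒜 ℬ x y ↔ ∃ ψ : QCHom (𝒜.compQC x) (ℬ.compQC y),
      Function.Bijective ψ.toFun ∧ ψ.toFun (some ⟨x, .refl x⟩) = some ⟨y, .refl y⟩ := by
  constructor
  · rintro ⟨E, hE, hx⟩
    exact ⟨hE.toQCHom, (Equiv.optionCongr E).bijective, congrArg some hx⟩
  · rintro ⟨ψ, hψ, hx⟩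
    obtain ⟨E, hE, hψE⟩ := ψ.exists_isStrictMorphism hψ (fun a => (h𝒜 a.1).compQC)
      (fun b => (hℬ b.1).compQC)
    exact ⟨E, hE, Option.some.inj ((hψE _).symm.trans hx)⟩

end Hom

end QC

namespace freeQTensorQC

variable {S : QCSetting V ι} {Q : Type*} {𝒬 : QC S Q}

local notation "𝒫" => freeQTensorQC 𝒬

theorem isStrictMorphism_cons :
    QC.IsStrictMorphism (𝒬.qtensor 𝒫) 𝒫 (fun p => FreeMonoid.of p.1 * p.2) := by
  rintro ⟨x, w⟩
  refine ⟨rfl, fun _ => rfl, fun _ => rfl, fun i => ?_, fun i => ?_⟩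
  · show Option.map _ (qfreeE 𝒬 i (x :: FreeMonoid.toList w)) = _
    simp only [qfreeE, QC.qtensor, freeQTensorQC, apply_ite (Option.map _), Option.map_none,
      Option.map_map]
    rfl
  · show Option.map _ (qfreeF 𝒬 i (x :: FreeMonoid.toList w)) = _
    simp only [qfreeF, QC.qtensor, freeQTensorQC, apply_ite (Option.map _), Option.map_none,
      Option.map_map]
    rfl

theorem isWeaklySeminormalAt (h𝒬 : ∀ x, 𝒬.IsWeaklySeminormalAt x) (w : FreeMonoid Q) :
    QC.IsWeaklySeminormalAt 𝒫 w := by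
  induction w using FreeMonoid.inductionOn' with
  | one =>
    refine ⟨fun _ => le_rfl, fun _ => le_rfl, fun i => ?_, fun _ => iff_of_true rfl (Or.inl rfl),
      fun _ => iff_of_true rfl (Or.inl rfl)⟩
    show (0 : WithTop ℤ) = 0 + ((S.pair 0 i : ℤ) : WithTop ℤ)
    simp [S.pair_zero]
  | of_mul x w ih =>
    exact (isStrictMorphism_cons (x, w)).isWeaklySeminormalAt_iff.mpr ((h𝒬 x).qtensor ih)

theorem isStrictAt_mul_one (h𝒬 : ∀ x, 𝒬.IsWeaklySeminormalAt x) (b : FreeMonoid Q) :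
    QC.IsStrictAt (QC.qtensor 𝒫 𝒫) 𝒫 (fun p => p.1 * p.2) (1, b) := by
  have h₁ := isWeaklySeminormalAt h𝒬 1
  have hb := isWeaklySeminormalAt h𝒬 b
  have hφ₁ (i : ι) : QC.φ 𝒫 i 1 = 0 := rfl
  refine ⟨(zero_add _).symm, fun i => ?_, fun i => ?_, fun i => ?_, fun i => ?_⟩
  · rw [QC.qtensor_eps h₁ hb, hφ₁, one_mul]
    simp [show QC.ε 𝒫 i 1 = 0 from rfl]
  · rw [QC.qtensor_phi h₁ hb, hφ₁, one_mul]
    simp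
  · rw [QC.qtensor_e h₁ hb, hφ₁, show QC.e 𝒫 i 1 = none from rfl, one_mul]
    rcases (hb.eps_nonneg i).eq_or_lt with hε | hε
    · simp [← hε, (hb.e_eq_none_iff i).mpr (Or.inl hε.symm)]
    · simp [hε, Option.map_map, Function.comp_def]
  · rw [QC.qtensor_f h₁ hb, hφ₁, one_mul]
    simp [Option.map_map, Function.comp_def]

/-- Induction on the first factor: `(x·a)·b = x·(a·b)` reduces to the associativity of `⊗̈`. -/
theorem isStrictMorphism_mul (h𝒬 : ∀ x, 𝒬.IsWeaklySeminormalAt x) :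
    QC.IsStrictMorphism (QC.qtensor 𝒫 𝒫) 𝒫 (fun p => p.1 * p.2) := by
  rintro ⟨a, b⟩
  induction a using FreeMonoid.inductionOn' with
  | one => exact isStrictAt_mul_one h𝒬 b
  | of_mul x a ih =>
    have hWS := isWeaklySeminormalAt h𝒬
    have hreassoc : QC.IsStrictAt (𝒬.qtensor (QC.qtensor 𝒫 𝒫)) (QC.qtensor 𝒫 𝒫)
        (Prod.map (fun p => FreeMonoid.of p.1 * p.2) id ∘ (Equiv.prodAssoc _ _ _).symm)
        (x, (a, b)) :=
      QC.IsStrictAt.comp ((isStrictMorphism_cons (x, a)).prodMap (QC.isStrictMorphism_id b))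
        (QC.isStrictAt_prodAssoc_symm (h𝒬 x) (hWS a) (hWS b))
    have hcons : QC.IsStrictAt (𝒬.qtensor (QC.qtensor 𝒫 𝒫)) 𝒫
        ((fun p => FreeMonoid.of p.1 * p.2) ∘ Prod.map id (fun p => p.1 * p.2)) (x, (a, b)) :=
      (isStrictMorphism_cons _).comp ((QC.isStrictMorphism_id x).prodMap ih)
    exact hreassoc.of_comp (by simpa [Function.comp_def, mul_assoc] using hcons)

theorem length_eq_of_e_eq_some {i : ι} {w z : FreeMonoid Q} (h : QC.e 𝒫 i w = some z) :
    z.length = w.length := by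
  induction w using FreeMonoid.inductionOn' generalizing z with
  | one => exact absurd h (by simp [show QC.e 𝒫 i 1 = none from rfl])
  | of_mul x w ih =>
    rw [(isStrictMorphism_cons (x, w)).e_apply] at h
    obtain ⟨q, hq, rfl⟩ := Option.map_eq_some_iff.mp h
    rcases QC.qtensor_e_eq_some hq with ⟨-, h₂⟩ | ⟨-, h₂⟩
    · simp [FreeMonoid.length_mul, h₂]
    · simp [FreeMonoid.length_mul, ih h₂]

theorem length_eq_of_f_eq_some {i : ι} {w z : FreeMonoid Q} (h : QC.f 𝒫 i w = some z) :
    z.length = w.length := by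
  induction w using FreeMonoid.inductionOn' generalizing z with
  | one => exact absurd h (by simp [show QC.f 𝒫 i 1 = none from rfl])
  | of_mul x w ih =>
    rw [(isStrictMorphism_cons (x, w)).f_apply] at h
    obtain ⟨q, hq, rfl⟩ := Option.map_eq_some_iff.mp h
    rcases QC.qtensor_f_eq_some hq with ⟨-, h₂⟩ | ⟨-, h₂⟩
    · simp [FreeMonoid.length_mul, h₂]
    · simp [FreeMonoid.length_mul, ih h₂]

theorem length_eq_of_adj {w z : FreeMonoid Q} (h : QC.Adj 𝒫 w z) : w.length = z.length := by
  obtain ⟨i, h | h | h | h⟩ := h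
  exacts [(length_eq_of_f_eq_some h).symm, length_eq_of_f_eq_some h,
    (length_eq_of_e_eq_some h).symm, length_eq_of_e_eq_some h]

theorem componentIso_mul (h𝒬 : ∀ x, 𝒬.IsWeaklySeminormalAt x) (p : FreeMonoid Q × FreeMonoid Q) :
    QC.ComponentIso (QC.qtensor 𝒫 𝒫) 𝒫 p (p.1 * p.2) := by
  refine QC.componentIso_of_isStrictMorphism (κ := fun p => p.1.length) (isStrictMorphism_mul h𝒬)
    (fun p q h => ?_) (fun p q hpq h => ?_) (fun p z h => ?_) p
  · rcases h.qtensor_cases with ⟨h₁, -⟩ | ⟨h₁, -⟩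
    exacts [length_eq_of_adj h₁, congrArg _ h₁]
  · have := List.append_inj (congrArg FreeMonoid.toList h) hpq
    exact Prod.ext this.1 this.2
  · have hlen : p.1.length ≤ z.length := by
      rw [← length_eq_of_adj h, FreeMonoid.length_mul]
      omega
    refine ⟨(FreeMonoid.ofList (z.toList.take p.1.length),
      FreeMonoid.ofList (z.toList.drop p.1.length)), ?_, List.take_append_drop _ _⟩
    simpa [FreeMonoid.length] using hlen

end freeQTensorQC

theorem hypoRel_iff_componentIso {S : QCSetting V ι} {Q : Type*} {𝒬 : QC S Q}
    (h : 𝒬.IsSeminormal) {u v : FreeMonoid Q} :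
    hypoRel 𝒬 u v ↔ QC.ComponentIso (freeQTensorQC 𝒬) (freeQTensorQC 𝒬) u v :=
  have hWS := freeQTensorQC.isWeaklySeminormalAt h.isWeaklySeminormalAt
  (QC.componentIso_iff_exists_qcHom hWS hWS).symm

/-- The hypoplactic congruence `∼̈` on `F^⊗̈(Q)` is a monoid
congruence on the free monoid `Q*`: it is an equivalence relation, and it is compatible
with concatenation. -/
theorem hypoRel_isCongruence {V : Type*} [NormedAddCommGroup V]
    [InnerProductSpace ℝ V] {ι : Type*} {S : QCSetting V ι} {Q : Type*}
    (𝒬 : QC S Q) (h : 𝒬.IsSeminormal) :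
    Equivalence (hypoRel 𝒬) ∧
    ∀ u v u' v' : FreeMonoid Q, hypoRel 𝒬 u v → hypoRel 𝒬 u' v' →
      hypoRel 𝒬 (u * u') (v * v') := by
  have hrel : hypoRel 𝒬 = QC.ComponentIso (freeQTensorQC 𝒬) (freeQTensorQC 𝒬) := by
    ext u v
    exact hypoRel_iff_componentIso h
  rw [hrel]
  refine ⟨⟨QC.ComponentIso.refl _, .symm, .trans⟩, fun u v u' v' huv hu'v' => ?_⟩
  have hmul := freeQTensorQC.componentIso_mul h.isWeaklySeminormalAt
  exact (hmul (u, u')).symm.trans ((huv.qtensor hu'v').trans (hmul (v, v')))
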